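/- arXiv:0902.2323 — 2 statements merged into one kernel-verified Lean document; each statement's English description precedes it below -/
import Mathlib

section
/- Let X be a nonempty set and let g : X* → X be an associative function. Then g is range-idempotent (i.e., g(g(x)^n) = g(x) for every string x ∈ X* and every integer n ≥ 1) if and only if g(x^n) = g(x) for every string x ∈ X* and every integer n ≥ 1, where x^n denotes the n-fold concatenation of x with itself. -/
variable {X : Type*}

/-- The string consisting of the single letter `g y` if `y` is nonempty, and the
empty string if `y` is empty (the convention `g ε = ε`). -/
def strOf (g : List X → X) (y : List X) : List X :=
  match y with
  | [] => []
  | _ => [g y]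

/-- Associativity for functions on strings. -/
def AssocStar (g : List X → X) : Prop :=
  ∀ x y z x' y' z' : List X, x ++ y ++ z = x' ++ y' ++ z' →
    g (x ++ strOf g y ++ z) = g (x' ++ strOf g y' ++ z')

/-- Range-idempotency for functions on strings. -/
def RangeIdem (g : List X → X) : Prop :=
  ∀ x : List X, x ≠ [] → ∀ n : ℕ, 1 ≤ n → g (List.replicate n (g x)) = g x

/-- Application of an `n`-ary function to a list of length `n`. -/
def liftF {n : ℕ} (f : (Fin n → X) → X) (l : List X) (h : l.length = n) : X :=
  f fun i => l.get (Fin.cast h.symm i)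

/-- Associativity for `n`-ary functions. -/
def AssocFin {n : ℕ} (f : (Fin n → X) → X) : Prop :=
  ∀ (x z x' z' y y' : List X) (hy : y.length = n) (hy' : y'.length = n),
    x.length + z.length = n - 1 → x'.length + z'.length = n - 1 →
    x ++ y ++ z = x' ++ y' ++ z' →
    ∀ (h : (x ++ [liftF f y hy] ++ z).length = n)
      (h' : (x' ++ [liftF f y' hy'] ++ z').length = n),
      liftF f (x ++ [liftF f y hy] ++ z) h = liftF f (x' ++ [liftF f y' hy'] ++ z') h'

variable {L : Type*} [DistribLattice L] [BoundedOrder L]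

/-- Lattice polynomial functions: representable in disjunctive normal form. -/
def IsPolynomialFn {n : ℕ} (f : (Fin n → L) → L) : Prop :=
  ∃ α : Finset (Fin n) → L,
    ∀ x : Fin n → L, f x = Finset.univ.sup fun I : Finset (Fin n) => α I ⊓ I.inf x

/-- The ternary median. -/
def med (a b c : L) : L := (a ⊔ b) ⊓ (a ⊔ c) ⊓ (b ⊔ c)

/-- The characteristic vector of `I ⊆ [n]`. -/
def charVec {n : ℕ} (I : Finset (Fin n)) : Fin n → L := fun i => if i ∈ I then ⊤ else ⊥

/-- A function on strings all of whose `n`-ary components (`n ≥ 1`) are polynomial. -/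
def IsPolyStar (g : List L → L) : Prop :=
  ∀ n : ℕ, 1 ≤ n → IsPolynomialFn fun x : Fin n → L => g (List.ofFn x)


lemma strOf_ne {g : List X → X} {y : List X} (hy : y ≠ []) : strOf g y = [g y] := by
  cases y with
  | nil => exact absurd rfl hy
  | cons a t => rfl

lemma rep_aux {g : List X → X} (hg : AssocStar g) (a y z : List X) (hy : y ≠ []) :
    g (a ++ [g y] ++ z) = g (a ++ y ++ z) := by
  have h := hg a y z [] [] (a ++ y ++ z) (by simp)
  simpa [strOf_ne hy, strOf] using h

lemma pow_aux {g : List X → X} (hg : AssocStar g) (x : List X) (hx : x ≠ []) :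
    ∀ (n : ℕ) (p : List X),
      g (p ++ (List.replicate n x).flatten) = g (p ++ List.replicate n (g x)) := by
  intro n
  induction n with
  | zero => intro p; simp
  | succ n ih =>
    intro p
    have h1 : g (p ++ [g x] ++ (List.replicate n x).flatten)
        = g (p ++ x ++ (List.replicate n x).flatten) := rep_aux hg _ _ _ hx
    have h2 := ih (p ++ [g x])
    simp only [List.replicate_succ, List.flatten_cons, List.append_assoc] at *
    rw [← h1, h2]
    simp

/-- an associative `g : X* → X` is range-idempotent if and only if
`g(xⁿ) = g(x)` for every string `x` and every `n ≥ 1`. -/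
theorem stmt3 [Nonempty X] (g : List X → X) (hg : AssocStar g) :
    RangeIdem g ↔ ∀ x : List X, x ≠ [] → ∀ n : ℕ, 1 ≤ n →
      g (List.flatten (List.replicate n x)) = g x := by
  constructor
  · intro hri x hx n hn
    have h := pow_aux hg x hx n []
    simp only [List.nil_append] at h
    rw [h]
    exact hri x hx n hn
  · intro hp x hx n hn
    have h1 : List.replicate n (g x) = (List.replicate n [g x]).flatten := by
      induction n with
      | zero => simp
      | succ n ih => simp [List.replicate_succ, ih]
    rw [h1, hp [g x] (by simp) n hn]
    have := rep_aux hg [] x [] hx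
    simpa using this
end

section
/- Let L be a bounded distributive lattice and let f : L^n → L be a lattice polynomial function. If f is associative, then f(x) = a ∨ (b ∧ x_1) ∨ (⋁_{i=1}^{n} (b ∧ c ∧ x_i)) ∨ (c ∧ x_n) ∨ (d ∧ ⋀_{i=1}^{n} x_i) for all x ∈ L^n, where a = f(0,…,0), b = f(1,0,…,0), c = f(0,…,0,1), and d = f(1,…,1). -/
variable {X : Type*}

variable {L : Type*} [DistribLattice L] [BoundedOrder L]

/-!
Write `β I = f (charVec I)`. A lattice polynomial function satisfies
`f x = ⋁ I, β I ⊓ ⋀ i ∈ I, x i` with `β` monotone, and expanding in one variable gives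
`f (update (charVec S) p u) = β S ⊔ (β (insert p S) ⊓ u)` for `p ∉ S`. Hence, for a 0-1 word of
length `2n - 1`, the value of `f (x f(y) z)` is an explicit expression in `β`, and associativity
equates these expressions for any two positions of the window `y`.

Put a set `A` at the start and a set `B` at the end of the word, separated by a gap `j`
(`A < j < B`). Moving the window from `j` to either end gives
`β (A ∪ B) ≤ β B ⊔ (β (insert 0 B) ⊓ β A)` and `β (A ∪ B) ≤ β A ⊔ (β (insert (n-1) A) ⊓ β B)`.
With `B = ∅`, resp. `A = ∅`, this yields `β I ≤ β {0}` if `n - 1 ∉ I` and `β I ≤ β {n-1}` if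
`0 ∉ I`; splitting at any `j ∉ I` then yields `β I ≤ β {0} ⊔ β {n-1}`. Finally, the word with a
single `1` at position `n - 1` gives `β {0} ⊓ β {n-1} ≤ β {i}` for every `i`. These bounds
collapse the normal form of `f` to the stated one.
-/

section Nest
variable {n : ℕ}

/-- `f (x f(y) z)` for the word `x y z = w 0 ⋯ w (2n-2)` with `|x| = k`. -/
def nestAt (f : (Fin n → X) → X) (w : ℕ → X) (k : ℕ) : X :=
  f fun i => if (i : ℕ) < k then w i else if (i : ℕ) = k then f (fun j => w (k + j))
    else w (i + (n - 1))

lemma liftF_eq_of_getElem (f : (Fin n → X) → X) {l : List X} (h : l.length = n) {x : Fin n → X}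
    (hx : ∀ (i : ℕ) (hi : i < n), l[i] = x ⟨i, hi⟩) : liftF f l h = f x := by
  unfold liftF
  congr 1
  funext i
  simp [hx]

lemma map_range_split (w : ℕ → X) {k : ℕ} (hk : k < n) :
    (List.range k).map w ++ (List.range n).map (fun j => w (k + j)) ++
      (List.range (n - 1 - k)).map (fun j => w (k + n + j)) = (List.range (2 * n - 1)).map w := by
  rw [show 2 * n - 1 = k + n + (n - 1 - k) by omega, List.range_add, List.range_add]
  simp [Function.comp_def]

lemma nestAt_eq_liftF (f : (Fin n → X) → X) (w : ℕ → X) {k : ℕ} (hk : k < n)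
    (hy : ((List.range n).map (fun j => w (k + j))).length = n)
    (h : ((List.range k).map w ++ [liftF f ((List.range n).map (fun j => w (k + j))) hy] ++
      (List.range (n - 1 - k)).map (fun j => w (k + n + j))).length = n) :
    nestAt f w k = liftF f ((List.range k).map w ++
      [liftF f ((List.range n).map (fun j => w (k + j))) hy] ++
      (List.range (n - 1 - k)).map (fun j => w (k + n + j))) h := by
  have hinner : liftF f _ hy = f fun j => w (k + j) := liftF_eq_of_getElem f hy (by simp)
  symm
  apply liftF_eq_of_getElem
  intro i hi
  rcases lt_trichotomy i k with hik | rfl | hik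
  · simp [hik]
  · simp [hinner]
  · obtain ⟨m, rfl⟩ : ∃ m, i = k + 1 + m := ⟨i - (k + 1), by omega⟩
    simp [List.getElem_append, show k + 1 + m - k = m + 1 by omega, show ¬k + 1 + m < k by omega,
      show k + 1 + m ≠ k by omega, show k + 1 + m + (n - 1) = k + n + m by omega]

theorem AssocFin.nestAt_eq {f : (Fin n → X) → X} (hf : AssocFin f) (w : ℕ → X) {k k' : ℕ}
    (hk : k < n) (hk' : k' < n) : nestAt f w k = nestAt f w k' := by
  have hy : ∀ m, ((List.range n).map (fun j => w (m + j))).length = n := by simp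
  rw [nestAt_eq_liftF f w hk (hy k) (by simp; omega),
    nestAt_eq_liftF f w hk' (hy k') (by simp; omega)]
  exact hf _ _ _ _ _ _ _ _ (by simp; omega) (by simp; omega)
    (by rw [map_range_split w hk, map_range_split w hk']) _ _

end Nest

section Polynomial
open Finset Function
variable {n : ℕ} {f : (Fin n → L) → L}

lemma Finset.inf_update_of_notMem {ι α : Type*} [DecidableEq ι] [SemilatticeInf α] [OrderTop α]
    {I : Finset ι} {p : ι} (hp : p ∉ I) (x : ι → α) (u : α) : I.inf (update x p u) = I.inf x :=
  inf_congr rfl fun _ hi => update_of_ne (ne_of_mem_of_not_mem hi hp) _ _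

lemma Finset.inf_eq_inf_update_bot_sup {ι : Type*} [DecidableEq ι] (I : Finset ι) (x : ι → L)
    (p : ι) : I.inf x = I.inf (update x p ⊥) ⊔ (I.inf (update x p ⊤) ⊓ x p) := by
  by_cases hp : p ∈ I
  · rw [← insert_erase hp]
    simp only [inf_insert, update_self, inf_update_of_notMem (notMem_erase p I)]
    simp [inf_comm]
  · simp only [inf_update_of_notMem hp, sup_inf_self]

lemma charVec_mono : Monotone (charVec : Finset (Fin n) → Fin n → L) := by
  intro I J hIJ i
  by_cases hi : i ∈ I
  · simp [charVec, hi, hIJ hi]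
  · simp [charVec, hi]

lemma IsPolynomialFn.monotone (hf : IsPolynomialFn f) : Monotone f := by
  obtain ⟨α, hα⟩ := hf
  intro x y hxy
  rw [hα, hα]
  exact sup_mono_fun fun I _ => inf_le_inf_left _ (inf_mono_fun fun i _ => hxy i)

lemma IsPolynomialFn.monotone_charVec (hf : IsPolynomialFn f) :
    Monotone fun I : Finset (Fin n) => f (charVec I) :=
  hf.monotone.comp charVec_mono

lemma inf_charVec_inf_le (I J : Finset (Fin n)) (x : Fin n → L) :
    J.inf (charVec I) ⊓ I.inf x ≤ J.inf x := by
  refine Finset.le_inf fun j hj => ?_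
  by_cases hjI : j ∈ I
  · exact inf_le_right.trans (inf_le hjI)
  · exact inf_le_left.trans ((inf_le hj).trans (by simp [charVec, hjI]))

lemma IsPolynomialFn.eq_sup_charVec (hf : IsPolynomialFn f) (x : Fin n → L) :
    f x = univ.sup fun I => f (charVec I) ⊓ I.inf x := by
  obtain ⟨α, hα⟩ := hf
  apply le_antisymm
  · rw [hα]
    refine sup_mono_fun fun I _ => inf_le_inf_right _ ?_
    rw [hα]
    refine le_trans ?_ (le_sup (mem_univ I))
    simp +contextual [charVec]
  · refine Finset.sup_le fun I _ => ?_
    rw [hα (charVec I), sup_inf_distrib_right, hα]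
    exact sup_mono_fun fun J _ =>
      (inf_assoc _ _ _).le.trans (inf_le_inf_left _ (inf_charVec_inf_le I J x))

lemma IsPolynomialFn.charVec_inf_le (hf : IsPolynomialFn f) (I : Finset (Fin n)) (x : Fin n → L) :
    f (charVec I) ⊓ I.inf x ≤ f x := by
  rw [hf.eq_sup_charVec x]
  exact le_sup (f := fun I => f (charVec I) ⊓ I.inf x) (mem_univ I)

lemma IsPolynomialFn.apply_eq_sup (hf : IsPolynomialFn f) (x : Fin n → L) (p : Fin n) :
    f x = f (update x p ⊥) ⊔ (f (update x p ⊤) ⊓ x p) := by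
  obtain ⟨α, hα⟩ := hf
  simp only [hα, sup_inf_distrib_right, ← sup_sup]
  refine sup_congr rfl fun I _ => ?_
  rw [Pi.sup_apply, inf_eq_inf_update_bot_sup I x p, inf_sup_left, inf_assoc]

lemma IsPolynomialFn.apply_update_charVec (hf : IsPolynomialFn f) {S : Finset (Fin n)} {p : Fin n}
    (hp : p ∉ S) (u : L) :
    f (update (charVec S) p u) = f (charVec S) ⊔ (f (charVec (insert p S)) ⊓ u) := by
  have h₀ : update (charVec S) p (⊥ : L) = charVec S := by
    ext i; by_cases hi : i = p <;> simp [charVec, hi, hp]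
  have h₁ : update (charVec S) p (⊤ : L) = charVec (insert p S) := by
    ext i; by_cases hi : i = p <;> simp [charVec, hi]
  rw [hf.apply_eq_sup _ p]
  simp [h₀, h₁]

end Polynomial

section BooleanWord
open Finset Function
variable {n : ℕ} {f : (Fin n → L) → L}

/-- For the 0-1 word with support `T` nested at position `k`, the outer arguments other than the
`k`-th are supported on `outerSupport n k T` and the window on `windowSupport n k T`. -/
def outerSupport (n k : ℕ) (T : Finset ℕ) : Finset (Fin n) :=
  {i | ((i : ℕ) < k ∧ (i : ℕ) ∈ T) ∨ (k < (i : ℕ) ∧ (i : ℕ) + (n - 1) ∈ T)}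

def windowSupport (n k : ℕ) (T : Finset ℕ) : Finset (Fin n) :=
  {j | k + (j : ℕ) ∈ T}

lemma IsPolynomialFn.nestAt_indicator (hf : IsPolynomialFn f) (T : Finset ℕ) {k : ℕ}
    (hk : k < n) :
    nestAt f (fun t => if t ∈ T then ⊤ else ⊥) k =
      f (charVec (outerSupport n k T)) ⊔
        (f (charVec (insert ⟨k, hk⟩ (outerSupport n k T))) ⊓
          f (charVec (windowSupport n k T))) := by
  have hk_notMem : (⟨k, hk⟩ : Fin n) ∉ outerSupport n k T := by simp [outerSupport]
  rw [← hf.apply_update_charVec hk_notMem]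
  unfold nestAt
  congr 1
  ext i
  rcases lt_trichotomy (i : ℕ) k with hik | hik | hik
  · simp [charVec, outerSupport, hik, Fin.ext_iff, hik.ne, lt_asymm hik]
  · obtain rfl : i = ⟨k, hk⟩ := Fin.ext hik
    simp only [lt_irrefl, if_false, if_true, update_self]
    congr 1
    ext j
    simp [charVec, windowSupport]
  · simp [charVec, outerSupport, hik, Fin.ext_iff, hik.ne', hik.not_gt]

lemma IsPolynomialFn.nested_charVec_eq (hf : IsPolynomialFn f) (hassoc : AssocFin f) (T : Finset ℕ)
    {k k' : ℕ} (hk : k < n) (hk' : k' < n) :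
    f (charVec (outerSupport n k T)) ⊔
        (f (charVec (insert ⟨k, hk⟩ (outerSupport n k T))) ⊓ f (charVec (windowSupport n k T))) =
      f (charVec (outerSupport n k' T)) ⊔
        (f (charVec (insert ⟨k', hk'⟩ (outerSupport n k' T))) ⊓
          f (charVec (windowSupport n k' T))) := by
  rw [← hf.nestAt_indicator T hk, ← hf.nestAt_indicator T hk']
  exact hassoc.nestAt_eq _ hk hk'

/-- The 0-1 word with `A` on its first `n` letters and `B` on its last `n` letters. -/
def splitWord (A B : Finset (Fin n)) : Finset ℕ :=
  A.image (↑) ∪ B.image fun b => ↑b + (n - 1)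

lemma union_subset_outerSupport_splitWord {A B : Finset (Fin n)} {j : Fin n}
    (hA : ∀ a ∈ A, a < j) (hB : ∀ b ∈ B, j < b) :
    A ∪ B ⊆ outerSupport n j (splitWord A B) := by
  intro i hi
  simp only [outerSupport, splitWord, mem_filter, mem_univ, true_and, mem_union, mem_image]
  rcases mem_union.1 hi with h | h
  · exact Or.inl ⟨hA i h, Or.inl ⟨i, h, rfl⟩⟩
  · exact Or.inr ⟨hB i h, Or.inr ⟨i, h, rfl⟩⟩

lemma outerSupport_zero_splitWord_subset (A B : Finset (Fin n)) :
    outerSupport n 0 (splitWord A B) ⊆ B := by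
  intro i
  simp only [outerSupport, splitWord, mem_filter, mem_univ, true_and, mem_union, mem_image]
  rintro (⟨h, -⟩ | ⟨h, ⟨a, -, ha⟩ | ⟨b, hb, hbi⟩⟩)
  · omega
  · have := a.isLt; omega
  · rwa [← Fin.ext (by omega : (b : ℕ) = i)]

lemma windowSupport_zero_splitWord_subset {A B : Finset (Fin n)} (hB : ∀ b ∈ B, (0 : ℕ) < b) :
    windowSupport n 0 (splitWord A B) ⊆ A := by
  intro i
  simp only [windowSupport, splitWord, mem_filter, mem_univ, true_and, mem_union, mem_image,
    zero_add]
  rintro (⟨a, ha, hai⟩ | ⟨b, hb, hbi⟩)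
  · rwa [← Fin.ext hai]
  · have := hB b hb; have := i.isLt; omega

lemma outerSupport_last_splitWord_subset (A B : Finset (Fin n)) :
    outerSupport n (n - 1) (splitWord A B) ⊆ A := by
  intro i
  simp only [outerSupport, splitWord, mem_filter, mem_univ, true_and, mem_union, mem_image]
  rintro (⟨h, ⟨a, ha, hai⟩ | ⟨b, -, hbi⟩⟩ | ⟨h, -⟩)
  · rwa [← Fin.ext hai]
  · omega
  · have := i.isLt; omega

lemma windowSupport_last_splitWord_subset {A B : Finset (Fin n)}
    (hA : ∀ a ∈ A, (a : ℕ) < n - 1) : windowSupport n (n - 1) (splitWord A B) ⊆ B := by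
  intro i
  simp only [windowSupport, splitWord, mem_filter, mem_univ, true_and, mem_union, mem_image]
  rintro (⟨a, ha, hai⟩ | ⟨b, hb, hbi⟩)
  · have := hA a ha; omega
  · rwa [← Fin.ext (by omega : (b : ℕ) = i)]

lemma IsPolynomialFn.charVec_union_le_insert_first (hf : IsPolynomialFn f) (hassoc : AssocFin f)
    (hn : 0 < n) {A B : Finset (Fin n)} {j : Fin n} (hA : ∀ a ∈ A, a < j) (hB : ∀ b ∈ B, j < b) :
    f (charVec (A ∪ B)) ≤ f (charVec B) ⊔ (f (charVec (insert ⟨0, hn⟩ B)) ⊓ f (charVec A)) := by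
  have hmono := hf.monotone_charVec
  have hout := outerSupport_zero_splitWord_subset A B
  have hwin := windowSupport_zero_splitWord_subset (A := A) fun b hb =>
    (Nat.zero_le _).trans_lt (hB b hb)
  calc f (charVec (A ∪ B)) ≤ f (charVec (outerSupport n j (splitWord A B))) :=
        hmono (union_subset_outerSupport_splitWord hA hB)
    _ ≤ _ := le_sup_left
    _ = _ := hf.nested_charVec_eq hassoc _ j.isLt hn
    _ ≤ _ := sup_le_sup (hmono hout) (inf_le_inf (hmono (insert_subset_insert _ hout)) (hmono hwin))

lemma IsPolynomialFn.charVec_union_le_insert_last (hf : IsPolynomialFn f) (hassoc : AssocFin f)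
    (hn : 0 < n) {A B : Finset (Fin n)} {j : Fin n} (hA : ∀ a ∈ A, a < j) (hB : ∀ b ∈ B, j < b) :
    f (charVec (A ∪ B)) ≤
      f (charVec A) ⊔ (f (charVec (insert ⟨n - 1, by omega⟩ A)) ⊓ f (charVec B)) := by
  have hmono := hf.monotone_charVec
  have hout := outerSupport_last_splitWord_subset A B
  have hwin := windowSupport_last_splitWord_subset (B := B) fun a ha =>
    (Fin.lt_def.1 (hA a ha)).trans_le (Nat.le_sub_one_of_lt j.isLt)
  calc f (charVec (A ∪ B)) ≤ f (charVec (outerSupport n j (splitWord A B))) :=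
        hmono (union_subset_outerSupport_splitWord hA hB)
    _ ≤ _ := le_sup_left
    _ = _ := hf.nested_charVec_eq hassoc _ j.isLt (by omega)
    _ ≤ _ := sup_le_sup (hmono hout) (inf_le_inf (hmono (insert_subset_insert _ hout)) (hmono hwin))

lemma IsPolynomialFn.charVec_le_first_of_last_notMem (hf : IsPolynomialFn f) (hassoc : AssocFin f)
    (hn : 0 < n) {I : Finset (Fin n)} (hI : (⟨n - 1, by omega⟩ : Fin n) ∉ I) :
    f (charVec I) ≤ f (charVec {⟨0, hn⟩}) := by
  have hA : ∀ a ∈ I, a < (⟨n - 1, by omega⟩ : Fin n) := fun a ha => by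
    have hne : a ≠ ⟨n - 1, by omega⟩ := fun h => hI (h ▸ ha)
    rw [Ne, Fin.ext_iff] at hne
    have := a.isLt
    exact Fin.lt_def.2 (by simp only at hne ⊢; omega)
  have := hf.charVec_union_le_insert_first hassoc hn hA (B := ∅) (by simp)
  rw [union_empty, insert_empty] at this
  exact this.trans (sup_le (hf.monotone_charVec (empty_subset _)) inf_le_left)

lemma IsPolynomialFn.charVec_le_last_of_first_notMem (hf : IsPolynomialFn f) (hassoc : AssocFin f)
    (hn : 0 < n) {I : Finset (Fin n)} (hI : (⟨0, hn⟩ : Fin n) ∉ I) :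
    f (charVec I) ≤ f (charVec {⟨n - 1, by omega⟩}) := by
  have hB : ∀ b ∈ I, (⟨0, hn⟩ : Fin n) < b := fun b hb => by
    have hne : b ≠ ⟨0, hn⟩ := fun h => hI (h ▸ hb)
    rw [Ne, Fin.ext_iff] at hne
    exact Fin.lt_def.2 (by simp only at hne ⊢; omega)
  have := hf.charVec_union_le_insert_last hassoc hn (A := ∅) (by simp) hB
  rw [empty_union, insert_empty] at this
  exact this.trans (sup_le (hf.monotone_charVec (empty_subset _)) inf_le_left)

lemma IsPolynomialFn.charVec_le_first_sup_last (hf : IsPolynomialFn f) (hassoc : AssocFin f)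
    (hn : 0 < n) {I : Finset (Fin n)} {j : Fin n} (hj : j ∉ I) :
    f (charVec I) ≤ f (charVec {⟨0, hn⟩}) ⊔ f (charVec {⟨n - 1, by omega⟩}) := by
  set A := I.filter (· < j)
  set B := I.filter (j < ·)
  have hI : A ∪ B = I := by
    ext i
    simp only [A, B, mem_union, mem_filter]
    rcases lt_trichotomy i j with h | rfl | h
    · simp [h, lt_asymm h]
    · simp [hj]
    · simp [h, lt_asymm h]
  have hA : f (charVec A) ≤ f (charVec {⟨0, hn⟩}) :=
    hf.charVec_le_first_of_last_notMem hassoc hn fun h =>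
      absurd (mem_filter.1 h).2 (not_lt.2 (Fin.le_def.2 (Nat.le_sub_one_of_lt j.isLt)))
  have hB : f (charVec B) ≤ f (charVec {⟨n - 1, by omega⟩}) :=
    hf.charVec_le_last_of_first_notMem hassoc hn fun h =>
      absurd (mem_filter.1 h).2 (not_lt.2 (Fin.le_def.2 (Nat.zero_le _)))
  calc f (charVec I) = f (charVec (A ∪ B)) := by rw [hI]
    _ ≤ f (charVec B) ⊔ (f (charVec (insert ⟨0, hn⟩ B)) ⊓ f (charVec A)) :=
        hf.charVec_union_le_insert_first hassoc hn (fun a ha => (mem_filter.1 ha).2)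
          (fun b hb => (mem_filter.1 hb).2)
    _ ≤ _ := by rw [sup_comm]; exact sup_le_sup (inf_le_right.trans hA) hB

lemma IsPolynomialFn.first_inf_last_le_charVec_singleton (hf : IsPolynomialFn f)
    (hassoc : AssocFin f) (hn : 0 < n) (i : Fin n) :
    f (charVec {⟨0, hn⟩}) ⊓ f (charVec {⟨n - 1, by omega⟩}) ≤ f (charVec {i}) := by
  have hmono := hf.monotone_charVec
  have hwin : {(⟨n - 1, by omega⟩ : Fin n)} ⊆ windowSupport n 0 {n - 1} := by
    simp [windowSupport]
  have hout : outerSupport n i {n - 1} = ∅ := by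
    ext i'
    simp only [outerSupport, mem_filter, mem_univ, true_and, mem_singleton, notMem_empty,
      iff_false]
    have := i.isLt
    have := i'.isLt
    omega
  calc f (charVec {⟨0, hn⟩}) ⊓ f (charVec {⟨n - 1, by omega⟩})
      ≤ f (charVec (insert ⟨0, hn⟩ (outerSupport n 0 {n - 1}))) ⊓
          f (charVec (windowSupport n 0 {n - 1})) :=
        inf_le_inf (hmono (by simp)) (hmono hwin)
    _ ≤ _ := le_sup_right
    _ = _ := hf.nested_charVec_eq hassoc {n - 1} hn i.isLt
    _ ≤ f (charVec (insert i (outerSupport n i {n - 1}))) :=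
        sup_le (hmono (subset_insert _ _)) inf_le_left
    _ = f (charVec {i}) := by rw [hout, insert_empty]

lemma IsPolynomialFn.charVec_inf_le_of_assoc (hf : IsPolynomialFn f) (hassoc : AssocFin f)
    (hn : 0 < n) (I : Finset (Fin n)) (x : Fin n → L) :
    f (charVec I) ⊓ I.inf x ≤
      f (charVec ∅) ⊔ (f (charVec {⟨0, hn⟩}) ⊓ x ⟨0, hn⟩) ⊔
        (univ.sup fun i => f (charVec {⟨0, hn⟩}) ⊓ f (charVec {⟨n - 1, by omega⟩}) ⊓ x i) ⊔
        (f (charVec {⟨n - 1, by omega⟩}) ⊓ x ⟨n - 1, by omega⟩) ⊔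
        (f (charVec univ) ⊓ univ.inf x) := by
  set b := f (charVec {⟨0, hn⟩})
  set c := f (charVec {⟨n - 1, by omega⟩})
  by_cases h0 : (⟨0, hn⟩ : Fin n) ∈ I <;> by_cases hl : (⟨n - 1, by omega⟩ : Fin n) ∈ I
  · by_cases hI : ∀ i, i ∈ I
    · obtain rfl : I = univ := eq_univ_iff_forall.2 hI
      exact le_sup_right
    obtain ⟨j, hj⟩ := not_forall.1 hI
    calc f (charVec I) ⊓ I.inf x ≤ (b ⊔ c) ⊓ I.inf x :=
          inf_le_inf_right _ (hf.charVec_le_first_sup_last hassoc hn hj)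
      _ = b ⊓ I.inf x ⊔ c ⊓ I.inf x := inf_sup_right _ _ _
      _ ≤ b ⊓ x ⟨0, hn⟩ ⊔ c ⊓ x ⟨n - 1, by omega⟩ :=
          sup_le_sup (inf_le_inf_left _ (inf_le h0)) (inf_le_inf_left _ (inf_le hl))
      _ ≤ _ := sup_le (le_sup_of_le_left (le_sup_of_le_left (le_sup_of_le_left le_sup_right)))
          (le_sup_of_le_left le_sup_right)
  · have : f (charVec I) ⊓ I.inf x ≤ b ⊓ x ⟨0, hn⟩ :=
      inf_le_inf (hf.charVec_le_first_of_last_notMem hassoc hn hl) (inf_le h0)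
    exact le_sup_of_le_left (le_sup_of_le_left (le_sup_of_le_left (le_sup_of_le_right this)))
  · have : f (charVec I) ⊓ I.inf x ≤ c ⊓ x ⟨n - 1, by omega⟩ :=
      inf_le_inf (hf.charVec_le_last_of_first_notMem hassoc hn h0) (inf_le hl)
    exact le_sup_of_le_left (le_sup_of_le_right this)
  · rcases I.eq_empty_or_nonempty with rfl | ⟨i, hi⟩
    · exact le_sup_of_le_left <| le_sup_of_le_left <| le_sup_of_le_left <|
        le_sup_of_le_left inf_le_left
    have : f (charVec I) ⊓ I.inf x ≤ b ⊓ c ⊓ x i :=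
      inf_le_inf (le_inf (hf.charVec_le_first_of_last_notMem hassoc hn hl)
        (hf.charVec_le_last_of_first_notMem hassoc hn h0)) (inf_le hi)
    exact le_sup_of_le_left <| le_sup_of_le_left <| le_sup_of_le_right <|
      le_sup_of_le (mem_univ i) this

end BooleanWord

/-- an associative lattice polynomial function `f : Lⁿ → L` has the form
`f(x) = a ∨ (b ∧ x₁) ∨ ⋁ᵢ (b ∧ c ∧ xᵢ) ∨ (c ∧ xₙ) ∨ (d ∧ ⋀ᵢ xᵢ)` where
`a = f(0,…,0)`, `b = f(1,0,…,0)`, `c = f(0,…,0,1)`, `d = f(1,…,1)`. -/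
theorem stmt10 {n : ℕ} (hn : 1 ≤ n) (f : (Fin n → L) → L)
    (hf : IsPolynomialFn f) (hassoc : AssocFin f)
    (a b c d : L)
    (ha : a = f fun _ => ⊥)
    (hb : b = f (charVec {(⟨0, by omega⟩ : Fin n)}))
    (hc : c = f (charVec {(⟨n - 1, by omega⟩ : Fin n)}))
    (hd : d = f fun _ => ⊤)
    (x : Fin n → L) :
    f x = a ⊔ (b ⊓ x ⟨0, by omega⟩) ⊔ (Finset.univ.sup fun i => b ⊓ c ⊓ x i) ⊔
      (c ⊓ x ⟨n - 1, by omega⟩) ⊔ (d ⊓ Finset.univ.inf x) := by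
  have hbot : (fun _ : Fin n => (⊥ : L)) = charVec ∅ := by ext; simp [charVec]
  have htop : (fun _ : Fin n => (⊤ : L)) = charVec Finset.univ := by ext; simp [charVec]
  subst ha hb hc hd
  rw [hbot, htop]
  apply le_antisymm
  · rw [hf.eq_sup_charVec x]
    exact Finset.sup_le fun I _ => hf.charVec_inf_le_of_assoc hassoc hn I x
  · refine sup_le (sup_le (sup_le (sup_le ?_ ?_) ?_) ?_) (hf.charVec_inf_le _ x)
    · simpa using hf.charVec_inf_le ∅ x
    · simpa using hf.charVec_inf_le {⟨0, hn⟩} x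
    · refine Finset.sup_le fun i _ => ?_
      have := inf_le_inf_right (x i) (hf.first_inf_last_le_charVec_singleton hassoc hn i)
      exact this.trans (by simpa using hf.charVec_inf_le {i} x)
    · simpa using hf.charVec_inf_le {⟨n - 1, by omega⟩} x
end
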